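/- In the setting of Proposition 2 of the paper: let x ∈ x_0 + K_k(g_0,H), let q_0,...,q_{k-1} be nonzero multiples of the conjugate directions q̂_i, let Q = (q_{k-1} ... q_0), and let B = σ(I - Q(Q^TQ)^{-1}Q^T) + HQ(Q^THQ)^{-1}Q^TH with σ > 0. Then the unique solution p of B p = -(Hx + c) is p = (1/σ)(-ĝ_k + ((ĝ_k^T H q_{k-1})/(q_{k-1}^T H q_{k-1})) q_{k-1}) + Σ_{i=0}^{k-1} (-( (Hx+c)^T q_i )/(q_i^T H q_i)) q_i, where ĝ_k is the gradient at the minimizer of f over x_0 + K_k(g_0,H). -/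

import Mathlib

open Matrix

def krylov {n : ℕ} (b : Fin n → ℝ) (A : Matrix (Fin n) (Fin n) ℝ) (k : ℕ) :
    Submodule ℝ (Fin n → ℝ) :=
  Submodule.span ℝ (Set.range fun i : Fin k => (A ^ (i : ℕ)).mulVec b)

/-!
The minimizers `x̂ j` of `f` over `x₀ + K_j` are characterised by the Galerkin condition
`∇f (x̂ j) ⊥ K_j`. It makes the steps `q i` mutually `H`-conjugate, and nonzero because `ĝ_k ≠ 0`,
so they form a basis of `K_k` and both `QᵀQ` and `QᵀHQ` are invertible. The matrix `B` acts as
`H` on `K_k = range Q`; on a vector `v` orthogonal to `K_k` it acts as `σ v` plus `H` times the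
`H`-orthogonal projection of `v` onto `K_k`. Since `H q i ∈ K_k` for `i < k - 1`, the projection
of `ĝ_k` is `α q_{k-1}` with `α = ĝ_kᵀ H q_{k-1} / q_{k-1}ᵀ H q_{k-1}`. Writing
`-(Hx + c) = -ĝ_k + H (x̂_k - x)` and expanding `x̂_k - x` in the conjugate basis shows that the
stated `p` solves `B p = -(Hx + c)`, and `B` is injective because `σ ≠ 0`.
-/

open Submodule Set

section Krylov

variable {n : ℕ} (b : Fin n → ℝ) (A : Matrix (Fin n) (Fin n) ℝ)

lemma krylov_mono {j m : ℕ} (h : j ≤ m) : krylov b A j ≤ krylov b A m := by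
  refine span_mono ?_
  rintro _ ⟨i, rfl⟩
  exact ⟨Fin.castLE h i, rfl⟩

lemma self_mem_krylov {m : ℕ} (hm : 0 < m) : b ∈ krylov b A m :=
  subset_span ⟨⟨0, hm⟩, by simp⟩

lemma mulVec_mem_krylov_succ {m : ℕ} {v : Fin n → ℝ} (hv : v ∈ krylov b A m) :
    A *ᵥ v ∈ krylov b A (m + 1) := by
  induction hv using span_induction with
  | mem _ h =>
    obtain ⟨i, rfl⟩ := h
    exact subset_span ⟨i.succ, by simp [mulVec_mulVec, pow_succ']⟩
  | zero => simp
  | add _ _ _ _ hx hy => rw [mulVec_add]; exact add_mem hx hy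
  | smul a _ _ hx => rw [mulVec_smul]; exact smul_mem _ a hx

end Krylov

lemma Matrix.IsSymm.dotProduct_mulVec_comm {R m : Type*} [CommSemiring R] [Fintype m]
    {H : Matrix m m R} (hH : H.IsSymm) (v w : m → R) : v ⬝ᵥ H *ᵥ w = w ⬝ᵥ H *ᵥ v := by
  rw [dotProduct_mulVec, ← mulVec_transpose, hH.eq, dotProduct_comm]

section Quadratic

variable {m : Type*} [Fintype m] {H : Matrix m m ℝ}

lemma quadratic_add (hH : H.IsSymm) (c z d : m → ℝ) :
    (1 / 2) * ((z + d) ⬝ᵥ H *ᵥ (z + d)) + c ⬝ᵥ (z + d) =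
      (1 / 2) * (z ⬝ᵥ H *ᵥ z) + c ⬝ᵥ z + (H *ᵥ z + c) ⬝ᵥ d + (1 / 2) * (d ⬝ᵥ H *ᵥ d) := by
  have := hH.dotProduct_mulVec_comm z d
  simp only [mulVec_add, dotProduct_add, add_dotProduct, dotProduct_comm (H *ᵥ z) d]
  linear_combination (1 / 2) * this

lemma gradient_dotProduct_eq_zero_of_forall_le (hH : H.IsSymm) {c z : m → ℝ}
    {S : Submodule ℝ (m → ℝ)}
    (hmin : ∀ v ∈ S, (1 / 2) * (z ⬝ᵥ H *ᵥ z) + c ⬝ᵥ z ≤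
      (1 / 2) * ((z + v) ⬝ᵥ H *ᵥ (z + v)) + c ⬝ᵥ (z + v))
    {v : m → ℝ} (hv : v ∈ S) : (H *ᵥ z + c) ⬝ᵥ v = 0 := by
  have hquad : ∀ s : ℝ,
      0 ≤ (1 / 2) * (v ⬝ᵥ H *ᵥ v) * (s * s) + (H *ᵥ z + c) ⬝ᵥ v * s + 0 := by
    intro s
    have := hmin (s • v) (smul_mem S s hv)
    rw [quadratic_add hH] at this
    simp only [mulVec_smul, dotProduct_smul, smul_dotProduct, smul_eq_mul] at this
    linarith
  have := discrim_le_zero hquad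
  rw [discrim] at this
  nlinarith [sq_nonneg ((H *ᵥ z + c) ⬝ᵥ v)]

end Quadratic

section Conjugate

variable {R m ι : Type*} [Field R] [Fintype m] [Fintype ι] {H : Matrix m m R} {q : ι → m → R}

lemma sum_smul_dotProduct_mulVec_of_pairwise
    (hconj : Pairwise fun i j => q i ⬝ᵥ H *ᵥ q j = 0) (a : ι → R) (j : ι) :
    (∑ i, a i • q i) ⬝ᵥ H *ᵥ q j = a j * (q j ⬝ᵥ H *ᵥ q j) := by
  simp only [sum_dotProduct, smul_dotProduct, smul_eq_mul]
  exact Finset.sum_eq_single_of_mem j (Finset.mem_univ j) fun i _ hij => by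
    rw [hconj hij, mul_zero]

lemma linearIndependent_of_pairwise_dotProduct_mulVec_eq_zero
    (hconj : Pairwise fun i j => q i ⬝ᵥ H *ᵥ q j = 0) (hd : ∀ i, q i ⬝ᵥ H *ᵥ q i ≠ 0) :
    LinearIndependent R q := by
  refine Fintype.linearIndependent_iff.mpr fun a ha j => ?_
  have := sum_smul_dotProduct_mulVec_of_pairwise hconj a j
  rw [ha, zero_dotProduct, eq_comm, mul_eq_zero] at this
  exact this.resolve_right (hd j)

lemma eq_sum_of_mem_span_of_pairwise_dotProduct_mulVec_eq_zero
    (hconj : Pairwise fun i j => q i ⬝ᵥ H *ᵥ q j = 0) (hd : ∀ i, q i ⬝ᵥ H *ᵥ q i ≠ 0)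
    {v : m → R} (hv : v ∈ Submodule.span R (range q)) :
    v = ∑ i, (v ⬝ᵥ H *ᵥ q i / q i ⬝ᵥ H *ᵥ q i) • q i := by
  obtain ⟨a, rfl⟩ := (mem_span_range_iff_exists_fun R).mp hv
  simp_rw [sum_smul_dotProduct_mulVec_of_pairwise hconj, mul_div_cancel_right₀ _ (hd _)]

end Conjugate

lemma span_range_eq_of_linearIndependent_of_le {K V ι : Type*} [DivisionRing K] [AddCommGroup V]
    [Module K V] [Fintype ι] {v w : ι → V} (hv : LinearIndependent K v)
    (hle : span K (range v) ≤ span K (range w)) : span K (range v) = span K (range w) :=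
  have := FiniteDimensional.span_of_finite K (finite_range w)
  eq_of_le_of_finrank_le hle <| by
    rw [finrank_span_eq_card hv]; exact finrank_range_le_card w

-- The first-order characterisation of `x j` minimising `½ yᵀHy + cᵀy` over `x0 + K_j(Hx0 + c, H)`.
structure IsKrylovGalerkin {n : ℕ} (H : Matrix (Fin n) (Fin n) ℝ) (c x0 : Fin n → ℝ)
    (x : ℕ → Fin n → ℝ) : Prop where
  sub_mem_krylov : ∀ j, x j - x0 ∈ krylov (H *ᵥ x0 + c) H j
  gradient_orthogonal : ∀ j, ∀ v ∈ krylov (H *ᵥ x0 + c) H j, (H *ᵥ x j + c) ⬝ᵥ v = 0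

namespace IsKrylovGalerkin

variable {n k : ℕ} {H : Matrix (Fin n) (Fin n) ℝ} {c x0 : Fin n → ℝ} {x : ℕ → Fin n → ℝ}
  {q : Fin k → Fin n → ℝ} {lam : Fin k → ℝ}

theorem of_forall_le (hH : H.IsSymm) (hmem : ∀ j, x j - x0 ∈ krylov (H *ᵥ x0 + c) H j)
    (hmin : ∀ j y, y - x0 ∈ krylov (H *ᵥ x0 + c) H j →
      (1 / 2) * (x j ⬝ᵥ H *ᵥ x j) + c ⬝ᵥ x j ≤ (1 / 2) * (y ⬝ᵥ H *ᵥ y) + c ⬝ᵥ y) :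
    IsKrylovGalerkin H c x0 x where
  sub_mem_krylov := hmem
  gradient_orthogonal j _ hv :=
    gradient_dotProduct_eq_zero_of_forall_le hH (fun v hv => hmin j _ <| by
      rw [add_sub_right_comm]; exact add_mem (hmem j) hv) hv

theorem sub_mem_krylov_of_le (hX : IsKrylovGalerkin H c x0 x) {i j m : ℕ} (hi : i ≤ m)
    (hj : j ≤ m) :
    x j - x i ∈ krylov (H *ᵥ x0 + c) H m := by
  rw [← sub_sub_sub_cancel_right _ _ x0]
  exact Submodule.sub_mem _ (krylov_mono _ _ hj (hX.sub_mem_krylov j))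
    (krylov_mono _ _ hi (hX.sub_mem_krylov i))

theorem sub_mem_krylov_of_sub_mem (hX : IsKrylovGalerkin H c x0 x) {m : ℕ} {y : Fin n → ℝ}
    (hy : y - x0 ∈ krylov (H *ᵥ x0 + c) H m) : x m - y ∈ krylov (H *ᵥ x0 + c) H m := by
  rw [← sub_sub_sub_cancel_right _ _ x0]
  exact Submodule.sub_mem _ (hX.sub_mem_krylov m) hy

theorem gradient_mem_krylov (hX : IsKrylovGalerkin H c x0 x) (j : ℕ) :
    H *ᵥ x j + c ∈ krylov (H *ᵥ x0 + c) H (j + 1) := by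
  have : H *ᵥ x j + c = H *ᵥ x0 + c + H *ᵥ (x j - x0) := by rw [mulVec_sub]; abel
  rw [this]
  exact add_mem (self_mem_krylov _ _ j.succ_pos) (mulVec_mem_krylov_succ _ _ (hX.sub_mem_krylov j))

theorem dotProduct_mulVec_step_eq_zero (hX : IsKrylovGalerkin H c x0 x) {j : ℕ} {v : Fin n → ℝ}
    (hv : v ∈ krylov (H *ᵥ x0 + c) H j) : v ⬝ᵥ H *ᵥ (x (j + 1) - x j) = 0 := by
  have hstep : H *ᵥ (x (j + 1) - x j) = (H *ᵥ x (j + 1) + c) - (H *ᵥ x j + c) := by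
    rw [mulVec_sub]; abel
  rw [hstep, dotProduct_sub, dotProduct_comm, dotProduct_comm v,
    hX.gradient_orthogonal _ v (krylov_mono _ _ j.le_succ hv), hX.gradient_orthogonal _ v hv,
    sub_zero]

theorem gradient_eq_zero_of_step_eq_zero (hX : IsKrylovGalerkin H c x0 x) {i : ℕ}
    (hi : x (i + 1) = x i) : H *ᵥ x i + c = 0 := by
  have := hX.gradient_orthogonal (i + 1) _ (hX.gradient_mem_krylov i)
  rwa [hi, dotProduct_self_eq_zero] at this

theorem gradient_eq_zero_of_le (hX : IsKrylovGalerkin H c x0 x) (hH : H.PosDef) {i k : ℕ}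
    (hik : i ≤ k) (hi : H *ᵥ x i + c = 0) : H *ᵥ x k + c = 0 := by
  have hgk : H *ᵥ x k + c = H *ᵥ (x k - x i) := by
    rw [mulVec_sub, ← add_sub_add_right_eq_sub _ _ c, hi, sub_zero]
  have hzero : (x k - x i) ⬝ᵥ H *ᵥ (x k - x i) = 0 := by
    rw [← hgk, dotProduct_comm]
    exact hX.gradient_orthogonal k _ (hX.sub_mem_krylov_of_le hik le_rfl)
  have hxk : x k - x i = 0 := by
    by_contra hne
    simpa [hzero] using hH.dotProduct_mulVec_pos hne
  rw [hgk, hxk, mulVec_zero]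

theorem smul_step_mem_krylov (hX : IsKrylovGalerkin H c x0 x)
    (hq : ∀ i : Fin k, q i = lam i • (x (i + 1) - x i)) {i : Fin k} {m : ℕ} (him : i + 1 ≤ m) :
    q i ∈ krylov (H *ᵥ x0 + c) H m := by
  rw [hq]
  exact smul_mem _ _ (hX.sub_mem_krylov_of_le (by omega) him)

theorem pairwise_dotProduct_mulVec_smul_step_eq_zero (hX : IsKrylovGalerkin H c x0 x)
    (hH : H.IsSymm) (hq : ∀ i : Fin k, q i = lam i • (x (i + 1) - x i)) :
    Pairwise fun i j => q i ⬝ᵥ H *ᵥ q j = 0 := by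
  have hlt : ∀ i j : Fin k, i < j → q i ⬝ᵥ H *ᵥ q j = 0 := fun i j hij => by
    rw [hq j, mulVec_smul, dotProduct_smul,
      hX.dotProduct_mulVec_step_eq_zero (hX.smul_step_mem_krylov hq (Fin.lt_def.mp hij)),
      smul_zero]
  intro i j hij
  rcases hij.lt_or_gt with h | h
  · exact hlt i j h
  · rw [hH.dotProduct_mulVec_comm]; exact hlt j i h

theorem dotProduct_mulVec_smul_step_pos (hX : IsKrylovGalerkin H c x0 x) (hH : H.PosDef)
    (hlam : ∀ i, lam i ≠ 0) (hq : ∀ i : Fin k, q i = lam i • (x (i + 1) - x i))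
    (hg : H *ᵥ x k + c ≠ 0) (i : Fin k) : 0 < q i ⬝ᵥ H *ᵥ q i := by
  have hstep : x (i + 1) - x i ≠ 0 := fun h => hg <|
    hX.gradient_eq_zero_of_le hH i.is_lt.le
      (hX.gradient_eq_zero_of_step_eq_zero (sub_eq_zero.mp h))
  simpa using hH.dotProduct_mulVec_pos (hq i ▸ smul_ne_zero (hlam i) hstep)

theorem span_smul_step_eq_krylov (hX : IsKrylovGalerkin H c x0 x)
    (hq : ∀ i : Fin k, q i = lam i • (x (i + 1) - x i))
    (hconj : Pairwise fun i j => q i ⬝ᵥ H *ᵥ q j = 0) (hd : ∀ i, q i ⬝ᵥ H *ᵥ q i ≠ 0) :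
    span ℝ (range q) = krylov (H *ᵥ x0 + c) H k :=
  span_range_eq_of_linearIndependent_of_le
    (linearIndependent_of_pairwise_dotProduct_mulVec_eq_zero hconj hd)
    (span_le.mpr <| range_subset_iff.mpr fun i => hX.smul_step_mem_krylov hq i.is_lt)

theorem dotProduct_mulVec_gradient_eq_zero (hX : IsKrylovGalerkin H c x0 x) (hH : H.IsSymm)
    {j : ℕ} (hjk : j + 1 ≤ k) {v : Fin n → ℝ} (hv : v ∈ krylov (H *ᵥ x0 + c) H j) :
    v ⬝ᵥ H *ᵥ (H *ᵥ x k + c) = 0 := by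
  rw [hH.dotProduct_mulVec_comm]
  exact hX.gradient_orthogonal k _ (krylov_mono _ _ hjk (mulVec_mem_krylov_succ _ _ hv))

theorem dotProduct_mulVec_gradient_sub_smul_eq_zero (hX : IsKrylovGalerkin H c x0 x)
    (hH : H.IsSymm) (hq : ∀ i : Fin k, q i = lam i • (x (i + 1) - x i))
    (hconj : Pairwise fun i j => q i ⬝ᵥ H *ᵥ q j = 0) (hd : ∀ i, q i ⬝ᵥ H *ᵥ q i ≠ 0)
    {l : Fin k} (hl : (l : ℕ) + 1 = k) (i : Fin k) :
    q i ⬝ᵥ H *ᵥ (H *ᵥ x k + c -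
      ((H *ᵥ x k + c) ⬝ᵥ H *ᵥ q l / q l ⬝ᵥ H *ᵥ q l) • q l) = 0 := by
  rw [mulVec_sub, mulVec_smul, dotProduct_sub, dotProduct_smul, smul_eq_mul]
  rcases eq_or_ne i l with rfl | hil
  · rw [hH.dotProduct_mulVec_comm, div_mul_cancel₀ _ (hd i), sub_self]
  · have hik : (i : ℕ) + 2 ≤ k := by have := Fin.val_ne_of_ne hil; omega
    rw [hX.dotProduct_mulVec_gradient_eq_zero hH hik (hX.smul_step_mem_krylov hq le_rfl),
      hconj hil, mul_zero, sub_zero]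

theorem sub_eq_sum_smul_step (hX : IsKrylovGalerkin H c x0 x) (hH : H.IsSymm)
    (hconj : Pairwise fun i j => q i ⬝ᵥ H *ᵥ q j = 0) (hd : ∀ i, q i ⬝ᵥ H *ᵥ q i ≠ 0)
    (hspan : span ℝ (range q) = krylov (H *ᵥ x0 + c) H k) {y : Fin n → ℝ}
    (hy : y - x0 ∈ krylov (H *ᵥ x0 + c) H k) :
    ∑ i, (-((H *ᵥ y + c) ⬝ᵥ q i) / (q i ⬝ᵥ H *ᵥ q i)) • q i = x k - y := by
  have hmem : x k - y ∈ span ℝ (range q) := hspan ▸ hX.sub_mem_krylov_of_sub_mem hy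
  conv_rhs => rw [eq_sum_of_mem_span_of_pairwise_dotProduct_mulVec_eq_zero hconj hd hmem]
  refine Finset.sum_congr rfl fun i _ => ?_
  have hi : (H *ᵥ x k + c) ⬝ᵥ q i = 0 :=
    hX.gradient_orthogonal k _ (hspan ▸ subset_span (mem_range_self i))
  rw [hH.dotProduct_mulVec_comm (x k - y), mulVec_sub, ← add_sub_add_right_eq_sub _ _ c,
    dotProduct_sub, dotProduct_comm (q i) (H *ᵥ x k + c), hi, zero_sub, dotProduct_comm (q i) (H *ᵥ y + c)]

end IsKrylovGalerkin

lemma Matrix.PosDef.isUnit_det_transpose_mul_mul {m ι : Type*} [Fintype m] [Fintype ι]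
    [DecidableEq ι] {H : Matrix m m ℝ} (hH : H.PosDef) {Q : Matrix m ι ℝ}
    (hQ : LinearIndependent ℝ Q.col) : IsUnit (Qᵀ * H * Q).det := by
  have := hH.conjTranspose_mul_mul_same (mulVec_injective_iff.mpr hQ)
  rw [conjTranspose_eq_transpose_of_trivial] at this
  exact (isUnit_iff_isUnit_det _).mp this.isUnit

lemma Matrix.mulVec_mem_span_range_col {m ι R : Type*} [Fintype ι] [CommSemiring R]
    (Q : Matrix m ι R) (u : ι → R) : Q *ᵥ u ∈ span R (range Q.col) :=
  range_mulVecLin Q ▸ LinearMap.mem_range_self Q.mulVecLin u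

lemma Matrix.mulVec_nonsing_inv_mul_mulVec {m ι R : Type*} [Fintype m] [Fintype ι]
    [DecidableEq ι] [CommRing R] {Q : Matrix m ι R} {N : Matrix ι m R} (hNQ : IsUnit (N * Q).det)
    {v : m → R} {u : ι → R} (h : N *ᵥ (v - Q *ᵥ u) = 0) :
    Q *ᵥ ((N * Q)⁻¹ *ᵥ (N *ᵥ v)) = Q *ᵥ u := by
  rw [mulVec_sub, sub_eq_zero] at h
  rw [h, mulVec_mulVec u N Q, mulVec_mulVec _ (N * Q)⁻¹, nonsing_inv_mul _ hNQ, one_mulVec]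

section FullMemoryQN

variable {m ι R : Type*} [Fintype m] [Fintype ι] [DecidableEq m] [DecidableEq ι] [Field R]

noncomputable def fullMemoryQNMatrix (σ : R) (H : Matrix m m R) (Q : Matrix m ι R) :
    Matrix m m R :=
  σ • (1 - Q * (Qᵀ * Q)⁻¹ * Qᵀ) + H * Q * (Qᵀ * H * Q)⁻¹ * Qᵀ * H

variable {σ : R} {H : Matrix m m R} {Q : Matrix m ι R}

lemma fullMemoryQNMatrix_mulVec (hQQ : IsUnit (Qᵀ * Q).det) (hQHQ : IsUnit (Qᵀ * H * Q).det)
    {v y z : m → R} (hy : y ∈ span R (range Q.col)) (hz : z ∈ span R (range Q.col))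
    (hvy : Qᵀ *ᵥ (v - y) = 0) (hvz : Qᵀ *ᵥ (H *ᵥ (v - z)) = 0) :
    fullMemoryQNMatrix σ H Q *ᵥ v = σ • (v - y) + H *ᵥ z := by
  rw [← range_mulVecLin] at hy hz
  obtain ⟨u, rfl⟩ := hy
  obtain ⟨w, rfl⟩ := hz
  simp only [mulVecLin_apply] at hvy hvz ⊢
  rw [mulVec_mulVec] at hvz
  have hB : fullMemoryQNMatrix σ H Q *ᵥ v = σ • (v - Q *ᵥ ((Qᵀ * Q)⁻¹ *ᵥ (Qᵀ *ᵥ v))) +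
      H *ᵥ (Q *ᵥ ((Qᵀ * H * Q)⁻¹ *ᵥ ((Qᵀ * H) *ᵥ v))) := by
    simp only [fullMemoryQNMatrix, add_mulVec, smul_mulVec, sub_mulVec, one_mulVec,
      mulVec_mulVec, Matrix.mul_assoc]
  rw [hB, mulVec_nonsing_inv_mul_mulVec hQQ hvy, mulVec_nonsing_inv_mul_mulVec hQHQ hvz]

lemma transpose_mul_fullMemoryQNMatrix (hQQ : IsUnit (Qᵀ * Q).det)
    (hQHQ : IsUnit (Qᵀ * H * Q).det) : Qᵀ * fullMemoryQNMatrix σ H Q = Qᵀ * H := by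
  have hP : Qᵀ * (Q * (Qᵀ * Q)⁻¹ * Qᵀ) = Qᵀ := by
    rw [← Matrix.mul_assoc, ← Matrix.mul_assoc, mul_nonsing_inv _ hQQ, Matrix.one_mul]
  have hPH : Qᵀ * (H * Q * (Qᵀ * H * Q)⁻¹ * Qᵀ * H) = Qᵀ * H := by
    simp only [← Matrix.mul_assoc]
    rw [mul_nonsing_inv _ hQHQ, Matrix.one_mul]
  rw [fullMemoryQNMatrix, Matrix.mul_add, Matrix.mul_smul, Matrix.mul_sub, Matrix.mul_one, hP,
    hPH, sub_self, smul_zero, zero_add]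

lemma fullMemoryQNMatrix_mulVec_injective (hσ : σ ≠ 0) (hQQ : IsUnit (Qᵀ * Q).det)
    (hQHQ : IsUnit (Qᵀ * H * Q).det) : Function.Injective (fullMemoryQNMatrix σ H Q).mulVec := by
  refine (injective_iff_map_eq_zero (fullMemoryQNMatrix σ H Q).mulVecLin).mpr fun v hv => ?_
  rw [mulVecLin_apply] at hv
  have hHv : Qᵀ *ᵥ (H *ᵥ v) = 0 := by
    rw [mulVec_mulVec, ← transpose_mul_fullMemoryQNMatrix hQQ hQHQ, ← mulVec_mulVec, hv,
      mulVec_zero]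
  set u := (Qᵀ * Q)⁻¹ *ᵥ (Qᵀ *ᵥ v)
  have hvu : Qᵀ *ᵥ (v - Q *ᵥ u) = 0 := by
    rw [mulVec_sub, mulVec_mulVec, mulVec_mulVec, mul_nonsing_inv _ hQQ, one_mulVec, sub_self]
  have hBv := fullMemoryQNMatrix_mulVec (σ := σ) hQQ hQHQ (Q.mulVec_mem_span_range_col u)
    (zero_mem _) hvu (by rwa [sub_zero])
  rw [hv, mulVec_zero, add_zero, eq_comm, smul_eq_zero, sub_eq_zero] at hBv
  have hv_eq : v = Q *ᵥ u := hBv.resolve_left hσ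
  have hu : u = 0 := calc
    u = ((Qᵀ * H * Q)⁻¹ * (Qᵀ * H * Q)) *ᵥ u := by rw [nonsing_inv_mul _ hQHQ, one_mulVec]
    _ = (Qᵀ * H * Q)⁻¹ *ᵥ (Qᵀ *ᵥ (H *ᵥ (Q *ᵥ u))) := by simp only [mulVec_mulVec, Matrix.mul_assoc]
    _ = 0 := by rw [← hv_eq, hHv, mulVec_zero]
  rw [hv_eq, hu, mulVec_zero]

lemma fullMemoryQNMatrix_mulVec_eq_iff (hσ : σ ≠ 0) (hQQ : IsUnit (Qᵀ * Q).det)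
    (hQHQ : IsUnit (Qᵀ * H * Q).det) {g a w : m → R} (hg : Qᵀ *ᵥ g = 0)
    (ha : a ∈ span R (range Q.col)) (hga : Qᵀ *ᵥ (H *ᵥ (g - a)) = 0)
    (hw : w ∈ span R (range Q.col)) (p : m → R) :
    fullMemoryQNMatrix σ H Q *ᵥ p = -g + H *ᵥ w ↔ p = σ⁻¹ • (-g + a) + w := by
  have hvy : σ⁻¹ • (-g + a) + w - (σ⁻¹ • a + w) = -σ⁻¹ • g := by module
  have hvz : σ⁻¹ • (-g + a) + w - w = -σ⁻¹ • (g - a) := by module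
  have hstep : fullMemoryQNMatrix σ H Q *ᵥ (σ⁻¹ • (-g + a) + w) = -g + H *ᵥ w := by
    rw [fullMemoryQNMatrix_mulVec hQQ hQHQ (add_mem (smul_mem _ _ ha) hw) hw, hvy, smul_smul,
      mul_neg, mul_inv_cancel₀ hσ, neg_one_smul]
    · rw [hvy, mulVec_smul, hg, smul_zero]
    · rw [hvz, mulVec_smul, mulVec_smul, hga, smul_zero]
  rw [← hstep]
  exact (fullMemoryQNMatrix_mulVec_injective hσ hQQ hQHQ).eq_iff

end FullMemoryQN

theorem full_memory_qn_step {n : ℕ}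
    (H : Matrix (Fin n) (Fin n) ℝ) (hH : H.PosDef)
    (c x0 : Fin n → ℝ) (g0 : Fin n → ℝ) (hg0 : g0 = H.mulVec x0 + c)
    (f : (Fin n → ℝ) → ℝ)
    (hf : ∀ x, f x = (1 / 2) * (x ⬝ᵥ H.mulVec x) + c ⬝ᵥ x)
    (xhat : ℕ → (Fin n → ℝ))
    (hmem : ∀ j : ℕ, xhat j - x0 ∈ krylov g0 H j)
    (hmin : ∀ j : ℕ, ∀ y : Fin n → ℝ, y - x0 ∈ krylov g0 H j → f (xhat j) ≤ f y)
    (k : ℕ) (hk : 1 ≤ k)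
    (ghat : Fin n → ℝ) (hghat : ghat = H.mulVec (xhat k) + c) (hgne : ghat ≠ 0)
    (q : Fin k → (Fin n → ℝ)) (lam : Fin k → ℝ) (hlam : ∀ i, lam i ≠ 0)
    (hq : ∀ i : Fin k, q i = lam i • (xhat ((i : ℕ) + 1) - xhat (i : ℕ)))
    (Q : Matrix (Fin n) (Fin k) ℝ) (hQ : ∀ i j, Q i j = q (Fin.rev j) i)
    (σ : ℝ) (hσ : 0 < σ)
    (B : Matrix (Fin n) (Fin n) ℝ)
    (hB : B = σ • (1 - Q * (Qᵀ * Q)⁻¹ * Qᵀ) + H * Q * (Qᵀ * H * Q)⁻¹ * Qᵀ * H)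
    (x : Fin n → ℝ) (hx : x - x0 ∈ krylov g0 H k)
    (qlast : Fin n → ℝ) (hqlast : qlast = q ⟨k - 1, by omega⟩) :
    ∀ p : Fin n → ℝ,
      B.mulVec p = -(H.mulVec x + c) ↔
        p = (1 / σ) •
              (-ghat + ((ghat ⬝ᵥ H.mulVec qlast) / (qlast ⬝ᵥ H.mulVec qlast)) • qlast) +
            ∑ i : Fin k,
              (-((H.mulVec x + c) ⬝ᵥ q i) / (q i ⬝ᵥ H.mulVec (q i))) • q i := by
  subst hg0 hghat hqlast hB
  have hHs : H.IsSymm := isHermitian_iff_isSymm.mp hH.isHermitian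
  have hX : IsKrylovGalerkin H c x0 xhat :=
    .of_forall_le hHs hmem fun j y hy => by simpa only [hf] using hmin j y hy
  have hconj := hX.pairwise_dotProduct_mulVec_smul_step_eq_zero hHs hq
  have hd i := (hX.dotProduct_mulVec_smul_step_pos hH hlam hq hgne i).ne'
  have hspan := hX.span_smul_step_eq_krylov hq hconj hd
  have hcol : Q.col = q ∘ Fin.rev := funext fun j => funext fun i => hQ i j
  have hQli : LinearIndependent ℝ Q.col :=
    hcol ▸ (linearIndependent_of_pairwise_dotProduct_mulVec_eq_zero hconj hd).comp _
      Fin.rev_injective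
  have hspanQ : span ℝ (range Q.col) = krylov (H *ᵥ x0 + c) H k := by
    rw [hcol, Fin.rev_surjective.range_comp, hspan]
  have hgrad : -(H *ᵥ x + c) = -(H *ᵥ xhat k + c) + H *ᵥ (xhat k - x) := by
    rw [mulVec_sub]; abel
  intro p
  rw [hX.sub_eq_sum_smul_step hHs hconj hd hspan hx, hgrad, one_div]
  refine fullMemoryQNMatrix_mulVec_eq_iff hσ.ne'
    (by simpa using PosDef.one.isUnit_det_transpose_mul_mul hQli)
    (hH.isUnit_det_transpose_mul_mul hQli) ?_ ?_ ?_ ?_ p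
  · funext j
    change Q.col j ⬝ᵥ _ = 0
    rw [dotProduct_comm]
    exact hX.gradient_orthogonal k _ (hspanQ ▸ subset_span (mem_range_self j))
  · exact smul_mem _ _ (hspanQ ▸ hX.smul_step_mem_krylov hq (Nat.sub_add_cancel hk).le)
  · funext j
    change Q.col j ⬝ᵥ _ = 0
    rw [hcol]
    exact hX.dotProduct_mulVec_gradient_sub_smul_eq_zero hHs hq hconj hd
      (Nat.sub_add_cancel hk) _
  · exact hspanQ ▸ hX.sub_mem_krylov_of_sub_mem hx
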